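/- arXiv:2103.14638 — 2 statements merged into one kernel-verified Lean document; each statement's English description precedes it below -/
import Mathlib

section
/- For all real s ∈ [0,1] and all real q ≥ 2, one has 2((1-s)^q - 1 + qs) ≥ e^{-qs} - 1 + qs. -/
theorem stmt0 (s q : ℝ) (hs0 : 0 ≤ s) (hs1 : s ≤ 1) (hq : 2 ≤ q) :
    2 * ((1 - s) ^ q - 1 + q * s) ≥ Real.exp (-(q * s)) - 1 + q * s := by
  set f : ℝ → ℝ := fun t => 2 * (1 - t) ^ q + q * t - Real.exp (-(q * t)) with hf
  -- derivative of f at any point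
  have hderiv : ∀ x : ℝ, HasDerivAt f
      (2 * (q * (1 - x) ^ (q - 1) * (0 - 1)) + q * 1 - Real.exp (-(q * x)) * (-(q * 1))) x := by
    intro x
    have h1 : HasDerivAt (fun t : ℝ => (1 - t) ^ q) (q * (1 - x) ^ (q - 1) * (0 - 1)) x := by
      have hbase : HasDerivAt (fun t : ℝ => 1 - t) (0 - 1) x :=
        (hasDerivAt_const x (1 : ℝ)).sub (hasDerivAt_id x)
      exact (Real.hasDerivAt_rpow_const (Or.inr (by linarith))).comp x hbase
    have h2 : HasDerivAt (fun t : ℝ => Real.exp (-(q * t))) (Real.exp (-(q * x)) * (-(q * 1))) x := by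
      have hin : HasDerivAt (fun t : ℝ => -(q * t)) (-(q * 1)) x :=
        ((hasDerivAt_id x).const_mul q).neg
      exact (Real.hasDerivAt_exp _).comp x hin
    exact ((h1.const_mul 2).add ((hasDerivAt_id x).const_mul q)).sub h2
  -- key pointwise inequality for the derivative
  have key : ∀ x : ℝ, 0 ≤ x → x ≤ 1 → 2 * (1 - x) ^ (q - 1) ≤ 1 + Real.exp (-(q * x)) := by
    intro x hx0 hx1
    set a : ℝ := Real.exp (-x) with ha
    have ha0 : 0 < a := Real.exp_pos _
    have ha1 : a ≤ 1 := by
      rw [ha]; calc Real.exp (-x) ≤ Real.exp 0 := Real.exp_le_exp.mpr (by linarith)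
        _ = 1 := Real.exp_zero
    have h1x : 1 - x ≤ a := by
      have := Real.add_one_le_exp (-x); linarith
    have step1 : (1 - x) ^ (q - 1) ≤ a ^ (q - 1) :=
      Real.rpow_le_rpow (by linarith) h1x (by linarith)
    set b : ℝ := a ^ (q - 1) with hb
    have hb1 : b ≤ 1 := Real.rpow_le_one ha0.le ha1 (by linarith)
    have hba : b ≤ a := by
      calc b ≤ a ^ (1 : ℝ) := Real.rpow_le_rpow_of_exponent_ge ha0 ha1 (by linarith)
        _ = a := Real.rpow_one a
    have haq : Real.exp (-(q * x)) = b * a := by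
      have h1 : Real.exp (-(q * x)) = a ^ q := by
        rw [ha, ← Real.exp_mul]; ring_nf
      have h2 : a ^ q = a ^ (q - 1) * a := by
        rw [← Real.rpow_add_one ha0.ne']; ring_nf
      rw [h1, h2, ← hb]
    rw [haq]
    nlinarith [mul_nonneg (sub_nonneg.mpr hb1) (sub_nonneg.mpr ha1), step1]
  -- monotonicity on [0,1]
  have hmono : MonotoneOn f (Set.Icc (0 : ℝ) 1) := by
    apply monotoneOn_of_deriv_nonneg (convex_Icc 0 1)
    · exact fun x _ => ((hderiv x).continuousAt).continuousWithinAt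
    · exact fun x _ => ((hderiv x).differentiableAt).differentiableWithinAt
    · intro x hx
      rw [interior_Icc] at hx
      rw [(hderiv x).deriv]
      have hk := key x hx.1.le hx.2.le
      have hexp : 0 < Real.exp (-(q * x)) := Real.exp_pos _
      nlinarith [key x hx.1.le hx.2.le]
  have h0 : f 0 ≤ f s := hmono (Set.mem_Icc.mpr ⟨le_refl 0, zero_le_one⟩) (Set.mem_Icc.mpr ⟨hs0, hs1⟩) hs0
  have hf0 : f 0 = 1 := by
    simp [hf, Real.rpow_natCast]; norm_num
  have hfs : f s = 2 * (1 - s) ^ q + q * s - Real.exp (-(q * s)) := rfl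
  rw [hf0] at h0
  rw [hfs] at h0
  linarith
end

section
/- Let Q be a finite nonnegative measure on [0,1]² (or more generally [0,1]^d) and for q ≥ 0 set ψ(q) = ∫ (e^{-q s₁} - 1 + q s₁) dQ(s) and ψ̃(q) = ∫ ((1-s₁)^q - 1 + q s₁) dQ(s). Then for all q ≥ 2, ψ̃(q) ≤ ψ(q) ≤ 2 ψ̃(q). Consequently, for any s > 0, ∫_s^∞ dq/ψ(q) < ∞ if and only if ∫_s^∞ dq/ψ̃(q) < ∞ (assuming ψ, ψ̃ are positive on [s,∞)). -/
/-!
Everything reduces to two pointwise inequalities for `u ∈ [0,1]`. First, `1 - u ≤ exp (-u)`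
gives `(1 - u) ^ q ≤ exp (-(q * u))`. Second, for `q ≥ 2` put `x = q * u`: if `x ≤ 2`, Bernoulli's
inequality with exponent `q / 2` gives `(1 - u) ^ q ≥ (1 - x / 2) ^ 2`, so twice the second
integrand is at least `x ^ 2 / 2 ≥ exp (-x) - 1 + x`; if `x > 2`, it is at least
`2 * (x - 1) ≥ x`. Integrating against `Q` gives `ψt ≤ ψ ≤ 2 ψt` on `[2, ∞)`. For the integral
test, both functions are continuous on `(0, ∞)` by dominated convergence (the integrands are
bounded by `1 + q`), so `1 / ψ` and `1 / ψt` are integrable on every compact piece of `[s, ∞)`,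
and on `[2, ∞)` each is bounded by a multiple of the other.
-/

open MeasureTheory Real Set

lemma exp_neg_le_one_sub_add_sq_div_two {x : ℝ} (hx : 0 ≤ x) : exp (-x) ≤ 1 - x + x ^ 2 / 2 := by
  rw [exp_neg, inv_le_iff_one_le_mul₀ (exp_pos x)]
  -- `(1 - x + x²/2)(1 + x + x²/2) = 1 + x⁴/4`
  calc (1 : ℝ) ≤ (1 - x + x ^ 2 / 2) * (1 + x + x ^ 2 / 2) := by nlinarith [pow_nonneg hx 4]
    _ ≤ (1 - x + x ^ 2 / 2) * exp x := by
      gcongr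
      · nlinarith
      · exact quadratic_le_exp_of_nonneg hx

lemma one_sub_rpow_le_exp_neg_mul {u q : ℝ} (hu : u ≤ 1) (hq : 0 ≤ q) :
    (1 - u) ^ q ≤ exp (-(q * u)) := by
  calc (1 - u) ^ q ≤ exp (-u) ^ q := rpow_le_rpow (by linarith) (one_sub_le_exp_neg u) hq
    _ = exp (-(q * u)) := by rw [← exp_mul]; ring_nf

lemma sq_one_sub_half_mul_le_one_sub_rpow {u q : ℝ} (hu : u ≤ 1) (hq : 2 ≤ q)
    (hqu : q * u ≤ 2) : (1 - q * u / 2) ^ 2 ≤ (1 - u) ^ q := by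
  have hbernoulli : 1 - q / 2 * u ≤ (1 - u) ^ (q / 2) := by
    simpa [sub_eq_add_neg] using one_add_mul_self_le_rpow_one_add (s := -u) (by linarith)
      (p := q / 2) (by linarith)
  calc (1 - q * u / 2) ^ 2 ≤ ((1 - u) ^ (q / 2)) ^ 2 := by
        gcongr <;> linarith
    _ = (1 - u) ^ q := by
        rw [← rpow_natCast, ← rpow_mul (by linarith)]; norm_num

noncomputable def expIntegrand (q u : ℝ) : ℝ := exp (-(q * u)) - 1 + q * u

noncomputable def powIntegrand (q u : ℝ) : ℝ := (1 - u) ^ q - 1 + q * u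

lemma powIntegrand_le_expIntegrand {q u : ℝ} (hu : u ≤ 1) (hq : 0 ≤ q) :
    powIntegrand q u ≤ expIntegrand q u := by
  unfold powIntegrand expIntegrand
  linarith [one_sub_rpow_le_exp_neg_mul hu hq]

lemma expIntegrand_le_two_mul_powIntegrand {q u : ℝ} (hu₀ : 0 ≤ u) (hu₁ : u ≤ 1) (hq : 2 ≤ q) :
    expIntegrand q u ≤ 2 * powIntegrand q u := by
  unfold powIntegrand expIntegrand
  have hqu : 0 ≤ q * u := mul_nonneg (by linarith) hu₀
  rcases le_or_gt (q * u) 2 with hqu₂ | hqu₂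
  · nlinarith [exp_neg_le_one_sub_add_sq_div_two hqu,
      sq_one_sub_half_mul_le_one_sub_rpow hu₁ hq hqu₂]
  · have : exp (-(q * u)) ≤ 1 := exp_le_one_iff.mpr (by linarith)
    nlinarith [rpow_nonneg (by linarith : (0 : ℝ) ≤ 1 - u) q]

lemma abs_sub_one_add_mul_le {v q u : ℝ} (hv₀ : 0 ≤ v) (hv₁ : v ≤ 1) (hq : 0 ≤ q)
    (hu₀ : 0 ≤ u) (hu₁ : u ≤ 1) : |v - 1 + q * u| ≤ 1 + q := by
  rw [abs_le]
  constructor <;> nlinarith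

lemma abs_expIntegrand_le {q u : ℝ} (hq : 0 ≤ q) (hu₀ : 0 ≤ u) (hu₁ : u ≤ 1) :
    |expIntegrand q u| ≤ 1 + q :=
  abs_sub_one_add_mul_le (exp_pos _).le (exp_le_one_iff.mpr (by nlinarith)) hq hu₀ hu₁

lemma abs_powIntegrand_le {q u : ℝ} (hq : 0 ≤ q) (hu₀ : 0 ≤ u) (hu₁ : u ≤ 1) :
    |powIntegrand q u| ≤ 1 + q :=
  abs_sub_one_add_mul_le (rpow_nonneg (by linarith) q)
    (rpow_le_one (by linarith) (by linarith) hq) hq hu₀ hu₁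

lemma continuous_expIntegrand_left (u : ℝ) : Continuous (expIntegrand · u) := by
  unfold expIntegrand; fun_prop

lemma continuousOn_powIntegrand_left (u : ℝ) : ContinuousOn (powIntegrand · u) (Ioi 0) := by
  intro q hq
  have : ContinuousAt (fun q : ℝ => (1 - u) ^ q) q := continuousAt_const_rpow' (ne_of_gt hq)
  exact (by unfold powIntegrand; fun_prop : ContinuousAt (powIntegrand · u) q).continuousWithinAt

section Integrals

variable {α : Type*} [MeasurableSpace α] {μ : Measure α} {X : α → ℝ}

lemma measurable_expIntegrand_comp (hX : Measurable X) (q : ℝ) :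
    Measurable fun s => expIntegrand q (X s) := by
  unfold expIntegrand; fun_prop

lemma measurable_powIntegrand_comp (hX : Measurable X) (q : ℝ) :
    Measurable fun s => powIntegrand q (X s) := by
  unfold powIntegrand; fun_prop

variable [IsFiniteMeasure μ]

lemma continuousOn_integral_of_abs_le_one_add {F : ℝ → α → ℝ}
    (hF_meas : ∀ q, AEStronglyMeasurable (F q) μ) (hF_le : ∀ q, 0 ≤ q → ∀ᵐ s ∂μ, |F q s| ≤ 1 + q)
    (hF_cont : ∀ᵐ s ∂μ, ContinuousOn (F · s) (Ioi 0)) :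
    ContinuousOn (fun q => ∫ s, F q s ∂μ) (Ioi 0) := by
  intro q₀ hq₀
  refine ContinuousAt.continuousWithinAt <|
    continuousAt_of_dominated (bound := fun _ => 2 + q₀) (.of_forall hF_meas) ?_
      (integrable_const _) (hF_cont.mono fun s hs => hs.continuousAt (Ioi_mem_nhds hq₀))
  filter_upwards [Ioo_mem_nhds hq₀ (lt_add_one q₀)] with q hq
  filter_upwards [hF_le q hq.1.le] with s hs
  rw [norm_eq_abs]
  linarith [hq.2]

lemma integrable_expIntegrand_comp (hX : Measurable X) (hX01 : ∀ᵐ s ∂μ, X s ∈ Icc 0 1) {q : ℝ}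
    (hq : 0 ≤ q) : Integrable (fun s => expIntegrand q (X s)) μ :=
  .of_bound (measurable_expIntegrand_comp hX q).aestronglyMeasurable (1 + q)
    (hX01.mono fun _ hs => abs_expIntegrand_le hq hs.1 hs.2)

lemma integrable_powIntegrand_comp (hX : Measurable X) (hX01 : ∀ᵐ s ∂μ, X s ∈ Icc 0 1) {q : ℝ}
    (hq : 0 ≤ q) : Integrable (fun s => powIntegrand q (X s)) μ :=
  .of_bound (measurable_powIntegrand_comp hX q).aestronglyMeasurable (1 + q)
    (hX01.mono fun _ hs => abs_powIntegrand_le hq hs.1 hs.2)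

lemma integral_powIntegrand_le_integral_expIntegrand (hX : Measurable X)
    (hX01 : ∀ᵐ s ∂μ, X s ∈ Icc 0 1) {q : ℝ} (hq : 0 ≤ q) :
    ∫ s, powIntegrand q (X s) ∂μ ≤ ∫ s, expIntegrand q (X s) ∂μ :=
  integral_mono_ae (integrable_powIntegrand_comp hX hX01 hq)
    (integrable_expIntegrand_comp hX hX01 hq)
    (hX01.mono fun _ hs => powIntegrand_le_expIntegrand hs.2 hq)

lemma integral_expIntegrand_le_two_mul_integral_powIntegrand (hX : Measurable X)
    (hX01 : ∀ᵐ s ∂μ, X s ∈ Icc 0 1) {q : ℝ} (hq : 2 ≤ q) :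
    ∫ s, expIntegrand q (X s) ∂μ ≤ 2 * ∫ s, powIntegrand q (X s) ∂μ := by
  rw [← integral_const_mul]
  exact integral_mono_ae (integrable_expIntegrand_comp hX hX01 (by linarith))
    ((integrable_powIntegrand_comp hX hX01 (by linarith)).const_mul 2)
    (hX01.mono fun _ hs => expIntegrand_le_two_mul_powIntegrand hs.1 hs.2 hq)

lemma continuousOn_integral_expIntegrand (hX : Measurable X) (hX01 : ∀ᵐ s ∂μ, X s ∈ Icc 0 1) :
    ContinuousOn (fun q => ∫ s, expIntegrand q (X s) ∂μ) (Ioi 0) :=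
  continuousOn_integral_of_abs_le_one_add
    (fun q => (measurable_expIntegrand_comp hX q).aestronglyMeasurable)
    (fun _ hq => hX01.mono fun _ hs => abs_expIntegrand_le hq hs.1 hs.2)
    (.of_forall fun s => (continuous_expIntegrand_left (X s)).continuousOn)

lemma continuousOn_integral_powIntegrand (hX : Measurable X) (hX01 : ∀ᵐ s ∂μ, X s ∈ Icc 0 1) :
    ContinuousOn (fun q => ∫ s, powIntegrand q (X s) ∂μ) (Ioi 0) :=
  continuousOn_integral_of_abs_le_one_add
    (fun q => (measurable_powIntegrand_comp hX q).aestronglyMeasurable)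
    (fun _ hq => hX01.mono fun _ hs => abs_powIntegrand_le hq hs.1 hs.2)
    (.of_forall fun s => continuousOn_powIntegrand_left (X s))

end Integrals

lemma integrableOn_Ioi_of_norm_le_const_mul {u v : ℝ → ℝ} {a b C : ℝ}
    (hu : ContinuousOn u (Ici a)) (hle : ∀ q ≥ b, ‖u q‖ ≤ C * v q)
    (hv : IntegrableOn v (Ioi a)) : IntegrableOn u (Ioi a) := by
  set m := max a b
  rw [← Ioc_union_Ioi_eq_Ioi (le_max_left a b : a ≤ m)]
  have hsub : Ioi m ⊆ Ici a := fun q hq => (le_max_left a b).trans hq.out.le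
  refine ((hu.mono Icc_subset_Ici_self).integrableOn_Icc.mono_set Ioc_subset_Icc_self).union ?_
  refine ((hv.mono_set (Ioi_subset_Ioi (le_max_left a b))).const_mul C).mono'
    ((hu.mono hsub).aestronglyMeasurable measurableSet_Ioi) ?_
  filter_upwards [self_mem_ae_restrict measurableSet_Ioi] with q hq
  exact hle q ((le_max_right a b).trans hq.out.le)

lemma integrableOn_Ioi_one_div_iff {f g : ℝ → ℝ} {a b C : ℝ}
    (hf : ContinuousOn f (Ici a)) (hg : ContinuousOn g (Ici a))
    (hf₀ : ∀ q ∈ Ici a, 0 < f q) (hg₀ : ∀ q ∈ Ici a, 0 < g q)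
    (hgf : ∀ q ≥ b, g q ≤ f q) (hfg : ∀ q ≥ b, f q ≤ C * g q) :
    IntegrableOn (fun q => 1 / f q) (Ioi a) ↔ IntegrableOn (fun q => 1 / g q) (Ioi a) := by
  have hpos : ∀ q ≥ max a b, 0 < f q ∧ 0 < g q := fun q hq =>
    ⟨hf₀ q (le_of_max_le_left hq), hg₀ q (le_of_max_le_left hq)⟩
  constructor
  · refine integrableOn_Ioi_of_norm_le_const_mul
      (continuousOn_const.div hg fun q hq => (hg₀ q hq).ne') (b := max a b) (C := C) fun q hq => ?_
    obtain ⟨hfq, hgq⟩ := hpos q hq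
    rw [norm_of_nonneg (by positivity), mul_one_div, div_le_div_iff₀ hgq hfq, one_mul]
    linarith [hfg q (le_of_max_le_right hq)]
  · refine integrableOn_Ioi_of_norm_le_const_mul
      (continuousOn_const.div hf fun q hq => (hf₀ q hq).ne') (b := max a b) (C := 1)
      fun q hq => ?_
    obtain ⟨hfq, hgq⟩ := hpos q hq
    rw [norm_of_nonneg (by positivity), one_mul]
    exact one_div_le_one_div_of_le hgq (hgf q (le_of_max_le_right hq))

theorem stmt9 (d : ℕ) (hd : 0 < d) (Q : Measure (Fin d → ℝ)) [IsFiniteMeasure Q]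
    (hcube : Q {s | ¬ ∀ i, s i ∈ Set.Icc (0 : ℝ) 1} = 0)
    (ψ ψt : ℝ → ℝ)
    (hψ : ∀ q, ψ q = ∫ s, (Real.exp (-(q * s ⟨0, hd⟩)) - 1 + q * s ⟨0, hd⟩) ∂Q)
    (hψt : ∀ q, ψt q = ∫ s, ((1 - s ⟨0, hd⟩) ^ q - 1 + q * s ⟨0, hd⟩) ∂Q) :
    (∀ q, 2 ≤ q → ψt q ≤ ψ q ∧ ψ q ≤ 2 * ψt q) ∧
    (∀ s > (0 : ℝ), (∀ q ∈ Set.Ici s, 0 < ψ q ∧ 0 < ψt q) →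
      (IntegrableOn (fun q => 1 / ψ q) (Set.Ioi s) ↔
        IntegrableOn (fun q => 1 / ψt q) (Set.Ioi s))) := by
  have hX : Measurable fun s : Fin d → ℝ => s ⟨0, hd⟩ := measurable_pi_apply _
  have hX01 : ∀ᵐ s ∂Q, s ⟨0, hd⟩ ∈ Icc 0 1 := (ae_iff.mpr hcube).mono fun s hs => hs _
  have hψ' : ψ = fun q => ∫ s, expIntegrand q (s ⟨0, hd⟩) ∂Q := funext hψ
  have hψt' : ψt = fun q => ∫ s, powIntegrand q (s ⟨0, hd⟩) ∂Q := funext hψt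
  have hcomp : ∀ q, 2 ≤ q → ψt q ≤ ψ q ∧ ψ q ≤ 2 * ψt q := fun q hq => by
    rw [hψ', hψt']
    exact ⟨integral_powIntegrand_le_integral_expIntegrand hX hX01 (by linarith),
      integral_expIntegrand_le_two_mul_integral_powIntegrand hX hX01 hq⟩
  refine ⟨hcomp, fun a ha hpos => ?_⟩
  have hsub : Ici a ⊆ Ioi 0 := Ici_subset_Ioi.mpr ha
  have hψ_cont : ContinuousOn ψ (Ici a) :=
    hψ' ▸ (continuousOn_integral_expIntegrand hX hX01).mono hsub
  have hψt_cont : ContinuousOn ψt (Ici a) :=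
    hψt' ▸ (continuousOn_integral_powIntegrand hX hX01).mono hsub
  exact integrableOn_Ioi_one_div_iff hψ_cont hψt_cont (fun q hq => (hpos q hq).1)
    (fun q hq => (hpos q hq).2) (fun q hq => (hcomp q hq).1) (fun q hq => (hcomp q hq).2)
end
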